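/- arXiv:1503.01799 — 2 statements merged into one kernel-verified Lean document; each statement's English description precedes it below -/
import Mathlib

section
/- Let z ≥ 2 be real and let d be a positive integer all of whose prime factors are strictly less than z. Then for every real D with 1 ≤ D ≤ d, there exists a divisor d₁ of d with D ≤ d₁ < z·D. -/
/-!
Take `d₁` to be the least divisor of `d` with `D ≤ d₁`. If `d₁ > 1`, remove one prime factor
`p < z` from it: the cofactor `d₁ / p` is a smaller divisor of `d`, so it lies below `D`, and
`d₁ = p · (d₁ / p) < z · D`.
-/

namespace Nat

theorem exists_least_dvd_ge {d : ℕ} {D : ℝ} (hDd : D ≤ d) :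
    ∃ e, e ∣ d ∧ D ≤ e ∧ ∀ m, m ∣ d → D ≤ m → e ≤ m := by
  classical
  have hex : ∃ n : ℕ, n ∣ d ∧ D ≤ n := ⟨d, dvd_rfl, hDd⟩
  exact ⟨Nat.find hex, (Nat.find_spec hex).1, (Nat.find_spec hex).2,
    fun m hm hDm => Nat.find_min' hex ⟨hm, hDm⟩⟩

theorem exists_dvd_lt_and_lt_mul_of_prime_lt {e : ℕ} {z : ℝ} (he : e ≠ 0) (he1 : e ≠ 1)
    (hsmooth : ∀ p : ℕ, p.Prime → p ∣ e → (p : ℝ) < z) :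
    ∃ m, m ∣ e ∧ m < e ∧ (e : ℝ) < z * m := by
  have hp : e.minFac.Prime := minFac_prime he1
  have hpe : e.minFac * (e / e.minFac) = e := Nat.mul_div_cancel' (minFac_dvd e)
  have hm : 0 < e / e.minFac := Nat.div_pos (minFac_le (pos_of_ne_zero he)) hp.pos
  refine ⟨e / e.minFac, div_dvd_of_dvd (minFac_dvd e),
    div_lt_self (pos_of_ne_zero he) hp.one_lt, ?_⟩
  calc (e : ℝ) = e.minFac * (e / e.minFac : ℕ) := by exact_mod_cast hpe.symm
    _ < z * (e / e.minFac : ℕ) := by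
      gcongr
      exact hsmooth _ hp (minFac_dvd e)

theorem exists_dvd_le_and_lt_mul_of_prime_lt {d : ℕ} {z D : ℝ} (hz : 1 < z)
    (hsmooth : ∀ p : ℕ, p.Prime → p ∣ d → (p : ℝ) < z) (hD : 1 ≤ D) (hDd : D ≤ d) :
    ∃ e, e ∣ d ∧ D ≤ e ∧ (e : ℝ) < z * D := by
  obtain ⟨e, hed, hDe, hleast⟩ := exists_least_dvd_ge hDd
  refine ⟨e, hed, hDe, ?_⟩
  by_cases he1 : e = 1
  · rw [he1, cast_one]
    calc (1 : ℝ) < z := hz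
      _ ≤ z * D := le_mul_of_one_le_right (by linarith) hD
  have he0 : e ≠ 0 := by
    rintro rfl
    norm_num at hDe
    linarith
  obtain ⟨m, hme, hm_lt, he_lt⟩ :=
    exists_dvd_lt_and_lt_mul_of_prime_lt he0 he1 fun p hp hpe => hsmooth p hp (hpe.trans hed)
  have hmD : (m : ℝ) < D := by
    by_contra! hDm
    exact absurd (hleast m (hme.trans hed) hDm) (not_le.mpr hm_lt)
  calc (e : ℝ) < z * m := he_lt
    _ ≤ z * D := by gcongr

end Nat

/-- **Divisor-factorization principle for smooth numbers.** Let `z ≥ 2` be real and let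
`d` be a positive integer all of whose prime factors are strictly less than `z`. Then
for every real `D` with `1 ≤ D ≤ d` there is a divisor `d₁` of `d` with `D ≤ d₁ < z·D`. -/
theorem smooth_number_divisor_in_range :
    ∀ z : ℝ, 2 ≤ z → ∀ d : ℕ, 0 < d → (∀ p : ℕ, p.Prime → p ∣ d → (p : ℝ) < z) →
    ∀ D : ℝ, 1 ≤ D → D ≤ (d : ℝ) →
    ∃ d₁ : ℕ, d₁ ∣ d ∧ D ≤ (d₁ : ℝ) ∧ (d₁ : ℝ) < z * D :=
  fun _ hz _ _ hsmooth _ hD hDd =>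
    Nat.exists_dvd_le_and_lt_mul_of_prime_lt (by linarith) hsmooth hD hDd
end

section
/- For every ε > 0 there is a constant C > 0 with the following property. Let N ≥ 2 be real, P = (2/3)N^{1/2}, and define f₀(α) = Σ_{p prime, P/2 ≤ p < P} e(p² α). Let Z be a finite set of integers contained in (N/2, N], and define K(α) = Σ_{n ∈ Z} e(−n α). Then ∫₀¹ |f₀(α)|³ |K(α)| dα ≤ C ( N^{3/4+ε} |Z|^{1/2} + N^{1/2+ε} |Z| ). -/
/-!
Let `S(α) = ∑_{a ∈ A} e(a²α)` with `A` the primes in `[P/2, P)`. By Cauchy–Schwarz,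
`∫ |S|³|K| ≤ (∫ |S|⁴)^{1/2} (∫ |S|²|K|²)^{1/2}`, and by orthogonality both integrals count
solutions of `a₁² + w(b₁) = a₂² + w(b₂)` with `aᵢ ∈ A`, `bᵢ ∈ B`, where `B = A`, `w(b) = b²`,
resp. `B = Z`, `w(n) = -n`. Solutions with `b₁ = b₂` number `|A||B|`. For `b₁ ≠ b₂` the pair
`(a₁, a₂)` is determined by the divisor `a₁ + a₂` of the nonzero integer `w(b₂) - w(b₁)` of size
at most `N`, so the divisor bound `d(n) ≪_ε n^ε` gives `∫ |S|⁴ ≪ N^{1+ε}` and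
`∫ |S|²|K|² ≪ N^{1/2}|Z| + N^ε|Z|²`.
-/

open Finset

/-- `e(x) = exp(2πix)`. -/
noncomputable def e (x : ℝ) : ℂ := Complex.exp (2 * Real.pi * Complex.I * x)

/-- The exponential sum over squares of primes `p ∈ [P/2, P)`:
`f₀(α) = Σ_{P/2 ≤ p < P} e(p² α)`. -/
noncomputable def f₀ (P α : ℝ) : ℂ :=
  ∑ p ∈ (range ⌈P⌉₊).filter (fun p : ℕ => p.Prime ∧ P / 2 ≤ (p : ℝ) ∧ (p : ℝ) < P),
    e ((p : ℝ) ^ 2 * α)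

lemma e_add (x y : ℝ) : e (x + y) = e x * e y := by
  simp only [e, ← Complex.exp_add]; push_cast; ring_nf

lemma e_neg (x : ℝ) : e (-x) = (starRingEnd ℂ) (e x) := by
  simp only [e, ← Complex.exp_conj, map_mul, Complex.conj_I, Complex.conj_ofReal, map_ofNat]
  push_cast; ring_nf

lemma continuous_e_mul (r : ℝ) : Continuous fun α : ℝ => e (r * α) := by
  unfold e; fun_prop

lemma integral_e_intCast_mul (k : ℤ) :
    ∫ α in (0 : ℝ)..1, e (k * α) = if k = 0 then 1 else 0 := by
  split_ifs with hk
  · simp [hk, e]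
  have hc : 2 * Real.pi * Complex.I * k ≠ 0 := by simp [Real.pi_ne_zero, hk]
  have hperiod : Complex.exp (2 * Real.pi * Complex.I * k) = 1 := by
    rw [← Complex.exp_int_mul_two_pi_mul_I k]; ring_nf
  simp only [e, Complex.ofReal_mul, Complex.ofReal_intCast, ← mul_assoc]
  rw [integral_exp_mul_complex hc]
  simp [hperiod]

theorem integral_norm_sum_e_sq {ι : Type*} (s : Finset ι) (c : ι → ℤ) :
    ∫ α in (0 : ℝ)..1, ‖∑ i ∈ s, e (c i * α)‖ ^ 2 = #{x ∈ s ×ˢ s | c x.1 = c x.2} := by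
  have hexpand : ∀ α : ℝ, ((‖∑ i ∈ s, e (c i * α)‖ ^ 2 : ℝ) : ℂ)
      = ∑ x ∈ s ×ˢ s, e ((c x.1 - c x.2 : ℤ) * α) := by
    intro α
    rw [Complex.ofReal_pow, ← Complex.mul_conj', map_sum, sum_mul_sum, ← sum_product']
    refine sum_congr rfl fun x _ => ?_
    rw [← e_neg, ← e_add]; push_cast; ring_nf
  apply Complex.ofReal_injective
  rw [← intervalIntegral.integral_ofReal, intervalIntegral.integral_congr fun α _ => hexpand α,
    intervalIntegral.integral_finsetSum fun x _ => (continuous_e_mul _).intervalIntegrable 0 1]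
  simp only [integral_e_intCast_mul, sub_eq_zero, sum_boole, Complex.ofReal_natCast]

open MeasureTheory in
theorem intervalIntegral.integral_mul_le_sqrt_mul_sqrt {u v : ℝ → ℝ} {a b : ℝ} (hab : a ≤ b)
    (hu : Continuous u) (hv : Continuous v) (hu0 : ∀ x, 0 ≤ u x) (hv0 : ∀ x, 0 ≤ v x) :
    ∫ x in a..b, u x * v x ≤ √(∫ x in a..b, u x ^ 2) * √(∫ x in a..b, v x ^ 2) := by
  have memLp_two : ∀ f : ℝ → ℝ, Continuous f →
      MemLp f (ENNReal.ofReal 2) (volume.restrict (Set.Ioc a b)) := fun f hf => by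
    rw [show ENNReal.ofReal 2 = 2 by norm_num,
      memLp_two_iff_integrable_sq hf.aestronglyMeasurable]
    exact (hf.pow 2).integrableOn_Ioc
  have := integral_mul_le_Lp_mul_Lq_of_nonneg Real.HolderConjugate.two_two
    (Filter.Eventually.of_forall hu0) (Filter.Eventually.of_forall hv0) (memLp_two u hu)
    (memLp_two v hv)
  simp only [intervalIntegral.integral_of_le hab, Real.sqrt_eq_rpow]
  simpa only [Real.rpow_two] using this

lemma add_one_le_max_mul_pow {x : ℝ} (hx : 1 < x) (a : ℕ) :
    (a + 1 : ℝ) ≤ max 1 (x - 1)⁻¹ * x ^ a := by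
  have hpow : 1 + a * (x - 1) ≤ x ^ a := one_add_mul_sub_le_pow (by linarith) a
  have hx1 : 0 < x - 1 := by linarith
  rcases le_total 1 (x - 1) with h | h
  · have : max 1 (x - 1)⁻¹ = 1 := max_eq_left (inv_le_one_of_one_le₀ h)
    rw [this, one_mul]
    nlinarith
  · calc (a + 1 : ℝ) ≤ (x - 1)⁻¹ * (1 + a * (x - 1)) := by
          rw [mul_add, mul_one, ← mul_assoc, mul_comm _ (a : ℝ), mul_assoc, inv_mul_cancel₀ hx1.ne']
          have : 1 ≤ (x - 1)⁻¹ := one_le_inv₀ hx1 |>.mpr h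
          linarith
      _ ≤ max 1 (x - 1)⁻¹ * x ^ a := by gcongr; exact le_max_right _ _

lemma natCast_rpow_eq_prod_primeFactors {n : ℕ} (hn : n ≠ 0) (ε : ℝ) :
    (n : ℝ) ^ ε = ∏ p ∈ n.primeFactors, ((p : ℝ) ^ ε) ^ n.factorization p := by
  conv_lhs => rw [Nat.prod_primeFactors_pow_factorization hn]
  push_cast
  rw [← Real.finsetProd_rpow _ _ (fun p _ => by positivity)]
  exact prod_congr rfl fun p _ => (Real.rpow_pow_comm (Nat.cast_nonneg p) ε _).symm

theorem card_divisors_le_mul_rpow {ε : ℝ} (hε : 0 < ε) :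
    ∃ C : ℝ, 1 ≤ C ∧ ∀ n : ℕ, n ≠ 0 → (#n.divisors : ℝ) ≤ C * (n : ℝ) ^ ε := by
  set K : ℝ := max 1 ((2 : ℝ) ^ ε - 1)⁻¹
  set B : ℕ := ⌈(2 : ℝ) ^ (1 / ε)⌉₊
  have hK : 1 ≤ K := le_max_left _ _
  have h2ε : 1 < (2 : ℝ) ^ ε := Real.one_lt_rpow (by norm_num) hε
  refine ⟨K ^ B, one_le_pow₀ hK, fun n hn => ?_⟩
  -- the local factor `a + 1` of `d(n)` at `p ^ a` is at most `(p ^ ε) ^ a` once `p ^ ε ≥ 2`, and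
  -- at most `K (p ^ ε) ^ a` for the fewer than `B` primes `p < 2 ^ (1 / ε)`
  have hlocal : ∀ p ∈ n.primeFactors, ((n.factorization p + 1 : ℕ) : ℝ)
      ≤ (if p < B then K else 1) * ((p : ℝ) ^ ε) ^ n.factorization p := by
    intro p hp
    have hp2 : (2 : ℝ) ≤ p := by exact_mod_cast (Nat.prime_of_mem_primeFactors hp).two_le
    have hpε : (2 : ℝ) ^ ε ≤ (p : ℝ) ^ ε := Real.rpow_le_rpow (by norm_num) hp2 hε.le
    push_cast
    refine (add_one_le_max_mul_pow (h2ε.trans_le hpε) _).trans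
      (mul_le_mul_of_nonneg_right ?_ (by positivity))
    split_ifs with hpB
    · exact max_le_max le_rfl (inv_anti₀ (by linarith) (by linarith))
    · have : (2 : ℝ) ≤ (p : ℝ) ^ ε := by
        have hB : (2 : ℝ) ^ (1 / ε) ≤ p := (Nat.le_ceil _).trans (by exact_mod_cast not_lt.mp hpB)
        calc (2 : ℝ) = ((2 : ℝ) ^ (1 / ε)) ^ ε := by
              rw [← Real.rpow_mul (by norm_num), one_div_mul_cancel hε.ne', Real.rpow_one]
          _ ≤ (p : ℝ) ^ ε := Real.rpow_le_rpow (by positivity) hB hε.le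
      exact max_le le_rfl (inv_le_one_of_one_le₀ (by linarith))
  have hsmall : ∏ p ∈ n.primeFactors, (if p < B then K else 1) ≤ K ^ B := by
    rw [prod_ite, prod_const, prod_const_one, mul_one]
    refine pow_le_pow_right₀ hK ((card_le_card fun p hp => ?_).trans (card_range B).le)
    exact mem_range.mpr (mem_filter.mp hp).2
  rw [Nat.card_divisors hn, natCast_rpow_eq_prod_primeFactors hn, Nat.cast_prod]
  calc ∏ p ∈ n.primeFactors, ((n.factorization p + 1 : ℕ) : ℝ)
      ≤ ∏ p ∈ n.primeFactors, (if p < B then K else 1) * ((p : ℝ) ^ ε) ^ n.factorization p :=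
        prod_le_prod (fun _ _ => by positivity) hlocal
    _ ≤ K ^ B * ∏ p ∈ n.primeFactors, ((p : ℝ) ^ ε) ^ n.factorization p := by
        rw [prod_mul_distrib]; gcongr

theorem card_sq_sub_sq_eq_le (A : Finset ℕ) {h : ℤ} (hh : h ≠ 0) :
    #{x ∈ A ×ˢ A | (x.1 : ℤ) ^ 2 - (x.2 : ℤ) ^ 2 = h} ≤ #h.natAbs.divisors := by
  refine card_le_card_of_injOn (fun x => x.1 + x.2) (fun x hx => ?_) fun x hx y hy hxy => ?_
  · have hfac : (x.1 : ℤ) ^ 2 - (x.2 : ℤ) ^ 2 = h := (mem_filter.mp hx).2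
    refine Nat.mem_divisors.mpr ⟨?_, Int.natAbs_ne_zero.mpr hh⟩
    rw [← Int.natCast_dvd, ← hfac]
    exact ⟨(x.1 : ℤ) - x.2, by push_cast; ring⟩
  · have hx' : (x.1 : ℤ) ^ 2 - (x.2 : ℤ) ^ 2 = h := (mem_filter.mp hx).2
    have hy' : (y.1 : ℤ) ^ 2 - (y.2 : ℤ) ^ 2 = h := (mem_filter.mp hy).2
    have hsum : (x.1 : ℤ) + x.2 = y.1 + y.2 := by exact_mod_cast hxy
    have hpos : (x.1 : ℤ) + x.2 ≠ 0 := by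
      rintro h0
      obtain ⟨h1, h2⟩ : x.1 = 0 ∧ x.2 = 0 := by omega
      exact hh (by simp [← hx', h1, h2])
    -- `a² - b² = (a + b)(a - b)`, so the sum `a + b` determines the difference
    have hdiff : (x.1 : ℤ) - x.2 = y.1 - y.2 := mul_left_cancel₀ hpos <| by
      linear_combination hx' - hy' - ((y.1 : ℤ) - y.2) * hsum
    ext <;> omega

theorem card_sq_add_eq_sq_add_le {ι : Type*} [DecidableEq ι] (A : Finset ℕ) (B : Finset ι)
    (w : ι → ℤ) (hw : Set.InjOn w B) (D : ℕ)
    (hD : ∀ b ∈ B, ∀ b' ∈ B, b ≠ b' → #(w b' - w b).natAbs.divisors ≤ D) :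
    #{x ∈ (A ×ˢ B) ×ˢ (A ×ˢ B) | (x.1.1 : ℤ) ^ 2 + w x.1.2 = (x.2.1 : ℤ) ^ 2 + w x.2.2}
      ≤ #A * #B + #B ^ 2 * D := by
  set T := {x ∈ (A ×ˢ B) ×ˢ (A ×ˢ B) | (x.1.1 : ℤ) ^ 2 + w x.1.2 = (x.2.1 : ℤ) ^ 2 + w x.2.2}
  have hdiag : #{x ∈ T | x.1.2 = x.2.2} ≤ #A * #B := by
    refine (card_le_card fun x hx => ?_).trans ((diag_card (A ×ˢ B)).trans (card_product A B)).le
    simp only [T, mem_filter, mem_product] at hx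
    obtain ⟨⟨⟨⟨ha, hb⟩, -⟩, heq⟩, hbb⟩ := hx
    have : x.1.1 = x.2.1 := by
      rw [hbb] at heq
      exact Nat.pow_left_injective two_ne_zero (by exact_mod_cast add_right_cancel heq)
    exact mem_diag.mpr ⟨mem_product.mpr ⟨ha, hb⟩, Prod.ext this hbb⟩
  have hoff : #{x ∈ T | x.1.2 ≠ x.2.2} ≤ D * #B.offDiag := by
    refine card_le_mul_card_image_of_maps_to (f := fun x => (x.1.2, x.2.2)) (fun x hx => ?_) D
      fun b hb => ?_
    · simp only [T, mem_filter, mem_product] at hx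
      exact mem_offDiag.mpr ⟨hx.1.1.1.2, hx.1.1.2.2, hx.2⟩
    obtain ⟨hb1, hb2, hne⟩ := mem_offDiag.mp hb
    calc _ ≤ #{y ∈ A ×ˢ A | (y.1 : ℤ) ^ 2 - (y.2 : ℤ) ^ 2 = w b.2 - w b.1} := by
          refine card_le_card_of_injOn (fun x => (x.1.1, x.2.1)) (fun x hx => ?_)
            fun x hx y hy hxy => ?_
          · simp only [T, coe_filter, mem_filter, mem_product, Prod.ext_iff] at hx
            obtain ⟨⟨⟨⟨⟨ha, -⟩, ha', -⟩, heq⟩, -⟩, h1, h2⟩ := hx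
            simp only [coe_filter, mem_product, Set.mem_ofPred_eq]
            exact ⟨⟨ha, ha'⟩, by rw [← h1, ← h2]; linarith⟩
          · simp only [coe_filter, mem_filter, Prod.ext_iff, Set.mem_ofPred_eq] at hx hy hxy
            ext <;> simp_all
      _ ≤ #(w b.2 - w b.1).natAbs.divisors :=
          card_sq_sub_sq_eq_le A (sub_ne_zero.mpr fun h => hne (hw hb1 hb2 h.symm))
      _ ≤ D := hD _ hb1 _ hb2 hne
  have hoffDiag : #B.offDiag ≤ #B ^ 2 := by rw [offDiag_card, sq]; exact Nat.sub_le _ _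
  calc #T = #{x ∈ T | x.1.2 = x.2.2} + #{x ∈ T | x.1.2 ≠ x.2.2} :=
        (card_filter_add_card_filter_not _).symm
    _ ≤ #A * #B + #B ^ 2 * D := by
        rw [mul_comm _ D]; exact add_le_add hdiag (hoff.trans (Nat.mul_le_mul_left D hoffDiag))

theorem integral_norm_sq_mul_norm_sq_eq_card {ι : Type*} (A : Finset ℕ) (B : Finset ι)
    (w : ι → ℤ) :
    ∫ α in (0 : ℝ)..1, ‖∑ a ∈ A, e ((a : ℝ) ^ 2 * α)‖ ^ 2 * ‖∑ b ∈ B, e (w b * α)‖ ^ 2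
      = #{x ∈ (A ×ˢ B) ×ˢ (A ×ˢ B) | (x.1.1 : ℤ) ^ 2 + w x.1.2 = (x.2.1 : ℤ) ^ 2 + w x.2.2} := by
  have hprod : ∀ α : ℝ, ‖∑ a ∈ A, e ((a : ℝ) ^ 2 * α)‖ ^ 2 * ‖∑ b ∈ B, e (w b * α)‖ ^ 2
      = ‖∑ x ∈ A ×ˢ B, e (((x.1 : ℤ) ^ 2 + w x.2 : ℤ) * α)‖ ^ 2 := by
    intro α
    rw [← mul_pow, ← norm_mul, sum_mul_sum, ← sum_product']
    congr 2
    refine sum_congr rfl fun x _ => ?_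
    rw [← e_add]; push_cast; ring_nf
  rw [intervalIntegral.integral_congr fun α _ => hprod α, integral_norm_sum_e_sq]

theorem integral_norm_cube_mul_norm_le (A : Finset ℕ) (Z : Finset ℤ) {X : ℝ} {D : ℕ}
    (hD : ∀ h : ℤ, h ≠ 0 → |(h : ℝ)| ≤ X → #h.natAbs.divisors ≤ D)
    (hA : ∀ a ∈ A, (a : ℝ) ^ 2 ≤ X) (hZ : ∀ m ∈ Z, ∀ n ∈ Z, |(m : ℝ) - n| ≤ X) :
    ∫ α in (0 : ℝ)..1, ‖∑ a ∈ A, e ((a : ℝ) ^ 2 * α)‖ ^ 3 * ‖∑ n ∈ Z, e (-(n * α))‖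
      ≤ #A * √(1 + D) * √(#A * #Z + #Z ^ 2 * D) := by
  set S : ℝ → ℝ := fun α => ‖∑ a ∈ A, e ((a : ℝ) ^ 2 * α)‖
  set K : ℝ → ℝ := fun α => ‖∑ n ∈ Z, e (((-n : ℤ) : ℝ) * α)‖
  have hK : ∀ α, ‖∑ n ∈ Z, e (-(n * α))‖ = K α := fun α => by simp only [K, Int.cast_neg, neg_mul]
  have hS : Continuous S :=
    continuous_norm.comp (continuous_finsetSum _ fun _ _ => continuous_e_mul _)
  have hKc : Continuous K :=
    continuous_norm.comp (continuous_finsetSum _ fun _ _ => continuous_e_mul _)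
  have hfourth : ∫ α in (0 : ℝ)..1, S α ^ 2 * S α ^ 2 ≤ #A ^ 2 * (1 + D) := by
    have hsq : Set.InjOn (fun b : ℕ => (b : ℤ) ^ 2) A := fun a _ b _ h => by simpa using h
    have hS2 : ∀ α, ‖∑ b ∈ A, e (((b : ℤ) ^ 2 : ℤ) * α)‖ = S α := fun α => by
      simp only [S, Int.cast_pow, Int.cast_natCast]
    calc ∫ α in (0 : ℝ)..1, S α ^ 2 * S α ^ 2
        = ∫ α in (0 : ℝ)..1, S α ^ 2 * ‖∑ b ∈ A, e (((b : ℤ) ^ 2 : ℤ) * α)‖ ^ 2 := by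
          simp only [hS2]
      _ = _ := integral_norm_sq_mul_norm_sq_eq_card A A _
      _ ≤ #A * #A + #A ^ 2 * D := by
          refine mod_cast card_sq_add_eq_sq_add_le A A _ hsq D fun a ha b hb hab => hD _ ?_ ?_
          · exact sub_ne_zero.mpr fun h => hab (hsq hb ha h).symm
          · have := hA a ha; have := hA b hb
            push_cast; rw [abs_le]; constructor <;> nlinarith
      _ = #A ^ 2 * (1 + D) := by ring
  have hmixed : ∫ α in (0 : ℝ)..1, S α ^ 2 * K α ^ 2 ≤ #A * #Z + #Z ^ 2 * D := by
    rw [integral_norm_sq_mul_norm_sq_eq_card A Z Neg.neg]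
    refine mod_cast card_sq_add_eq_sq_add_le A Z _ neg_injective.injOn D fun m hm n hn hmn => ?_
    rw [neg_sub_neg]
    exact hD _ (sub_ne_zero.mpr hmn) (mod_cast hZ m hm n hn)
  calc ∫ α in (0 : ℝ)..1, ‖∑ a ∈ A, e ((a : ℝ) ^ 2 * α)‖ ^ 3 * ‖∑ n ∈ Z, e (-(n * α))‖
      = ∫ α in (0 : ℝ)..1, S α ^ 2 * (S α * K α) :=
        intervalIntegral.integral_congr fun α _ => by simp only [hK, S]; ring
    _ ≤ √(∫ α in (0 : ℝ)..1, (S α ^ 2) ^ 2) * √(∫ α in (0 : ℝ)..1, (S α * K α) ^ 2) :=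
        intervalIntegral.integral_mul_le_sqrt_mul_sqrt zero_le_one (hS.pow 2) (hS.mul hKc)
          (fun _ => by positivity) fun _ => by positivity
    _ ≤ √(#A ^ 2 * (1 + D)) * √(#A * #Z + #Z ^ 2 * D) := by
        simp only [← sq, mul_pow] at hfourth hmixed ⊢
        gcongr
    _ = #A * √(1 + D) * √(#A * #Z + #Z ^ 2 * D) := by
        rw [Real.sqrt_mul (sq_nonneg _), Real.sqrt_sq (Nat.cast_nonneg _)]

theorem mul_sqrt_one_add_mul_sqrt_le {N ε C₀ M D z : ℝ} (hN : 1 ≤ N) (hε : 0 ≤ ε) (hC₀ : 1 ≤ C₀)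
    (hM0 : 0 ≤ M) (hM : M ≤ 2 * N ^ ((1 : ℝ) / 2)) (hD0 : 0 ≤ D) (hD : D ≤ C₀ * N ^ ε)
    (hz : 0 ≤ z) :
    M * √(1 + D) * √(M * z + z ^ 2 * D)
      ≤ 4 * C₀ * (N ^ (3 / 4 + ε) * z ^ ((1 : ℝ) / 2) + N ^ (1 / 2 + ε) * z) := by
  -- substitute `N = r⁴`, `N ^ ε = t`, `z = y²`; the claim becomes polynomial
  set r := N ^ ((1 : ℝ) / 4)
  set t := N ^ ε
  set y := z ^ ((1 : ℝ) / 2)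
  have hN0 : 0 ≤ N := by linarith
  have hr : 0 ≤ r := by positivity
  have hy : 0 ≤ y := by positivity
  have ht : 1 ≤ t := Real.one_le_rpow hN hε
  have hpow : ∀ k : ℕ, N ^ ((k : ℝ) / 4) = r ^ k := fun k => by
    rw [← Real.rpow_natCast, ← Real.rpow_mul hN0]; ring_nf
  have hr2 : N ^ ((1 : ℝ) / 2) = r ^ 2 := by rw [← hpow]; norm_num
  have hr3 : N ^ (3 / 4 + ε) = r ^ 3 * t := by
    rw [Real.rpow_add (by linarith), ← hpow, Nat.cast_ofNat]
  have hr2t : N ^ (1 / 2 + ε) = r ^ 2 * t := by rw [Real.rpow_add (by linarith), hr2]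
  have hy2 : z = y ^ 2 := by simp only [y, ← Real.sqrt_eq_rpow, Real.sq_sqrt hz]
  have hsqrt : M * √(1 + D) * √(M * z + z ^ 2 * D)
      = √(M ^ 2 * (1 + D) * (M * z + z ^ 2 * D)) := by
    rw [Real.sqrt_mul (by positivity), Real.sqrt_mul (sq_nonneg M), Real.sqrt_sq hM0]
  rw [hr2] at hM
  rw [hsqrt, hr3, hr2t, hy2, Real.sqrt_le_iff]
  refine ⟨by positivity, ?_⟩
  have h1 : M ^ 2 * (1 + D) ≤ 8 * C₀ * r ^ 4 * t := by
    have : M ^ 2 ≤ 4 * r ^ 4 := by nlinarith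
    have : 1 + D ≤ 2 * C₀ * t := by nlinarith
    calc M ^ 2 * (1 + D) ≤ 4 * r ^ 4 * (2 * C₀ * t) := by gcongr
      _ = _ := by ring
  have h2 : M * y ^ 2 + (y ^ 2) ^ 2 * D ≤ 2 * r ^ 2 * y ^ 2 + C₀ * t * y ^ 4 := by
    have : M * y ^ 2 ≤ 2 * r ^ 2 * y ^ 2 := by gcongr
    have : (y ^ 2) ^ 2 * D ≤ y ^ 4 * (C₀ * t) := by rw [← pow_mul]; gcongr
    linarith
  calc M ^ 2 * (1 + D) * (M * y ^ 2 + (y ^ 2) ^ 2 * D)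
      ≤ 8 * C₀ * r ^ 4 * t * (2 * r ^ 2 * y ^ 2 + C₀ * t * y ^ 4) := by gcongr
    _ ≤ (4 * C₀ * (r ^ 3 * t * y + r ^ 2 * t * y ^ 2)) ^ 2 := by
      have hCt : C₀ * t ≤ C₀ ^ 2 * t ^ 2 := by
        have : 1 ≤ C₀ * t := one_le_mul_of_one_le_of_one_le hC₀ ht
        nlinarith
      have hcross : 0 ≤ C₀ ^ 2 * t ^ 2 * r ^ 5 * y ^ 3 := by positivity
      nlinarith [mul_le_mul_of_nonneg_right hCt (by positivity : 0 ≤ r ^ 6 * y ^ 2)]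

/-- **Hua-type mean-value bound (cf. Wooley (3.21)–(3.23)).** For every `ε > 0` there is
`C > 0` such that for real `N ≥ 2`, `P = (2/3)N^(1/2)`, and any finite set `Z` of integers
contained in `(N/2, N]`, with `K(α) = Σ_{n ∈ Z} e(-nα)`, one has
`∫₀¹ |f₀(α)|³ |K(α)| dα ≤ C (N^(3/4+ε) |Z|^(1/2) + N^(1/2+ε) |Z|)`. -/
theorem mean_value_bound_f0_cubed :
    ∀ ε : ℝ, 0 < ε →
    ∃ C : ℝ, 0 < C ∧
      ∀ N P : ℝ, 2 ≤ N → P = 2 / 3 * N ^ ((1 : ℝ) / 2) →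
      ∀ Z : Finset ℤ, (∀ n ∈ Z, N / 2 < (n : ℝ) ∧ (n : ℝ) ≤ N) →
      (∫ α in (0 : ℝ)..1, ‖f₀ P α‖ ^ 3 * ‖∑ n ∈ Z, e (-(n * α))‖)
        ≤ C * (N ^ (3 / 4 + ε) * (Z.card : ℝ) ^ ((1 : ℝ) / 2) + N ^ (1 / 2 + ε) * Z.card) := by
  intro ε hε
  obtain ⟨C₀, hC₀1, hC₀⟩ := card_divisors_le_mul_rpow hε
  refine ⟨4 * C₀, by positivity, fun N P hN hP Z hZ => ?_⟩
  set A := (range ⌈P⌉₊).filter fun p : ℕ => p.Prime ∧ P / 2 ≤ (p : ℝ) ∧ (p : ℝ) < P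
  have hsqrtN : 1 ≤ N ^ ((1 : ℝ) / 2) := Real.one_le_rpow (by linarith) (by norm_num)
  have hP0 : 0 ≤ P := by rw [hP]; positivity
  have hA : ∀ a ∈ A, (a : ℝ) ^ 2 ≤ N := fun a ha => by
    have haP : (a : ℝ) < P := (mem_filter.mp ha).2.2.2
    calc (a : ℝ) ^ 2 ≤ (N ^ ((1 : ℝ) / 2)) ^ 2 := by gcongr; linarith
      _ = N := by rw [← Real.sqrt_eq_rpow, Real.sq_sqrt (by linarith)]
  have hcardA : (#A : ℝ) ≤ 2 * N ^ ((1 : ℝ) / 2) := by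
    have : #A ≤ ⌈P⌉₊ := (card_filter_le _ _).trans (card_range _).le
    linarith [(Nat.cast_le (α := ℝ)).mpr this, Nat.ceil_lt_add_one hP0]
  have hZdiff : ∀ m ∈ Z, ∀ n ∈ Z, |(m : ℝ) - n| ≤ N := fun m hm n hn => by
    have := hZ m hm; have := hZ n hn
    rw [abs_le]; constructor <;> linarith
  have hdiv : ∀ h : ℤ, h ≠ 0 → |(h : ℝ)| ≤ N → #h.natAbs.divisors ≤ ⌊C₀ * N ^ ε⌋₊ :=
    fun h hh hhN => Nat.le_floor <| (hC₀ _ (Int.natAbs_ne_zero.mpr hh)).trans <| by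
      gcongr; rwa [Nat.cast_natAbs, Int.cast_abs]
  calc _ ≤ _ := integral_norm_cube_mul_norm_le A Z hdiv hA hZdiff
    _ ≤ _ := mul_sqrt_one_add_mul_sqrt_le (by linarith) hε.le hC₀1 (Nat.cast_nonneg _) hcardA
        (Nat.cast_nonneg _) (Nat.floor_le (by positivity)) (Nat.cast_nonneg _)
end
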